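/- arXiv:2012.15163 — 6 statements merged into one kernel-verified Lean document; each statement's English description precedes it below -/
import Mathlib

section
/- Let A₁, ..., A_m be symmetric positive-definite N×N real matrices, and let E_i = {A_i v : ‖v‖ < 1}. Then the boundary of the Minkowski sum E₁ + ⋯ + E_m equals the set { Σ_{i=1}^m A_i² n / ‖A_i n‖ : n ∈ S^{N-1} }. -/
open Matrix

noncomputable def euclNorm {N : ℕ} (v : Fin N → ℝ) : ℝ :=
  ‖(WithLp.equiv 2 (Fin N → ℝ)).symm v‖


/-- Minkowski sum of a finite family of sets in `ℝ^N`. -/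
def minkSum {N m : ℕ} (E : Fin m → Set (Fin N → ℝ)) : Set (Fin N → ℝ) :=
  {x | ∃ c : Fin m → (Fin N → ℝ), (∀ i, c i ∈ E i) ∧ x = ∑ i, c i}

open Metric RealInnerProductSpace

set_option linter.unusedSectionVars false

/-- Minkowski sum (auxiliary version for a general space). -/
def mSum {F : Type*} [AddCommMonoid F] {m : ℕ} (S : Fin m → Set F) : Set F :=
  {x | ∃ c : Fin m → F, (∀ i, c i ∈ S i) ∧ x = ∑ i, c i}

variable {F : Type*} [NormedAddCommGroup F] [InnerProductSpace ℝ F] [FiniteDimensional ℝ F] {m : ℕ}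

theorem upper_bound (T : Fin m → F →L[ℝ] F)
    (hsym : ∀ i x y, ⟪T i x, y⟫ = ⟪x, T i y⟫)
    {n x : F} (hx : x ∈ mSum (fun i => T i '' closedBall 0 1)) :
    ⟪x, n⟫ ≤ ∑ i, ‖T i n‖ := by
  obtain ⟨c, hc, rfl⟩ := hx
  rw [sum_inner]
  refine Finset.sum_le_sum fun i _ => ?_
  obtain ⟨v, hv, hvi⟩ := hc i
  rw [← hvi]
  rw [mem_closedBall, dist_zero_right] at hv
  calc ⟪T i v, n⟫ = ⟪v, T i n⟫ := hsym i v n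
    _ ≤ ‖v‖ * ‖T i n‖ := real_inner_le_norm v _
    _ ≤ 1 * ‖T i n‖ := mul_le_mul_of_nonneg_right hv (norm_nonneg _)
    _ = ‖T i n‖ := one_mul _

theorem strict_upper_bound (T : Fin m → F →L[ℝ] F)
    (hsym : ∀ i x y, ⟪T i x, y⟫ = ⟪x, T i y⟫)
    (hinj : ∀ i, Function.Injective (T i)) (hm : 0 < m)
    {n x : F} (hn : n ≠ 0) (hx : x ∈ mSum (fun i => T i '' ball 0 1)) :
    ⟪x, n⟫ < ∑ i, ‖T i n‖ := by
  obtain ⟨c, hc, rfl⟩ := hx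
  rw [sum_inner]
  refine Finset.sum_lt_sum_of_nonempty ⟨⟨0, hm⟩, Finset.mem_univ _⟩ fun i _ => ?_
  obtain ⟨v, hv, hvi⟩ := hc i
  rw [← hvi]
  rw [mem_ball, dist_zero_right] at hv
  have hTn : 0 < ‖T i n‖ := by
    rw [norm_pos_iff]
    intro h
    exact hn (hinj i (h.trans (map_zero (T i)).symm))
  calc ⟪T i v, n⟫ = ⟪v, T i n⟫ := hsym i v n
    _ ≤ ‖v‖ * ‖T i n‖ := real_inner_le_norm v _
    _ < 1 * ‖T i n‖ := mul_lt_mul_of_pos_right hv hTn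
    _ = ‖T i n‖ := one_mul _

theorem boundary_mem (T : Fin m → F →L[ℝ] F)
    (hinj : ∀ i, Function.Injective (T i)) {n : F} (hn : ‖n‖ = 1) :
    (∑ i, (‖T i n‖)⁻¹ • T i (T i n)) ∈ mSum (fun i => T i '' closedBall 0 1) := by
  have hn0 : n ≠ 0 := by intro h; rw [h, norm_zero] at hn; norm_num at hn
  have hTn : ∀ i, 0 < ‖T i n‖ := fun i => by
    rw [norm_pos_iff]
    intro h
    exact hn0 (hinj i (h.trans (map_zero (T i)).symm))
  refine ⟨fun i => (‖T i n‖)⁻¹ • T i (T i n), fun i => ?_, rfl⟩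
  refine ⟨(‖T i n‖)⁻¹ • T i n, ?_, by rw [_root_.map_smul]⟩
  rw [mem_closedBall, dist_zero_right, norm_smul, norm_inv, norm_norm,
    inv_mul_cancel₀ (hTn i).ne']

theorem inner_boundary (T : Fin m → F →L[ℝ] F)
    (hsym : ∀ i x y, ⟪T i x, y⟫ = ⟪x, T i y⟫)
    (hinj : ∀ i, Function.Injective (T i)) {n : F} (hn : ‖n‖ = 1) :
    ⟪∑ i, (‖T i n‖)⁻¹ • T i (T i n), n⟫ = ∑ i, ‖T i n‖ := by
  have hn0 : n ≠ 0 := by intro h; rw [h, norm_zero] at hn; norm_num at hn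
  have hTn : ∀ i, 0 < ‖T i n‖ := fun i => by
    rw [norm_pos_iff]
    intro h
    exact hn0 (hinj i (h.trans (map_zero (T i)).symm))
  rw [sum_inner]
  refine Finset.sum_congr rfl fun i _ => ?_
  rw [real_inner_smul_left, hsym i, real_inner_self_eq_norm_sq, pow_two, ← mul_assoc,
    inv_mul_cancel₀ (hTn i).ne', one_mul]

/-- equality case -/
theorem eq_of_inner_eq (T : Fin m → F →L[ℝ] F)
    (hsym : ∀ i x y, ⟪T i x, y⟫ = ⟪x, T i y⟫)
    (hinj : ∀ i, Function.Injective (T i)) {n x : F} (hn0 : n ≠ 0)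
    (hx : x ∈ mSum (fun i => T i '' closedBall 0 1))
    (heq : ⟪x, n⟫ = ∑ i, ‖T i n‖) :
    x = ∑ i, (‖T i n‖)⁻¹ • T i (T i n) := by
  obtain ⟨c, hc, rfl⟩ := hx
  have hTn : ∀ i, 0 < ‖T i n‖ := fun i => by
    rw [norm_pos_iff]
    intro h
    exact hn0 (hinj i (h.trans (map_zero (T i)).symm))
  choose v hv hvc using hc
  simp only [mem_closedBall, dist_zero_right] at hv
  have hle : ∀ i ∈ Finset.univ, ⟪c i, n⟫ ≤ ‖T i n‖ := by
    intro i _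
    rw [← hvc i]
    calc ⟪T i (v i), n⟫ = ⟪v i, T i n⟫ := hsym i _ n
      _ ≤ ‖v i‖ * ‖T i n‖ := real_inner_le_norm _ _
      _ ≤ 1 * ‖T i n‖ := mul_le_mul_of_nonneg_right (hv i) (norm_nonneg _)
      _ = ‖T i n‖ := one_mul _
  rw [sum_inner] at heq
  have hall := (Finset.sum_eq_sum_iff_of_le hle).mp heq
  refine Finset.sum_congr rfl fun i _ => ?_
  have hi : ⟪v i, T i n⟫ = ‖T i n‖ := by
    rw [← hsym i, hvc i]; exact hall i (Finset.mem_univ i)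
  have hnv : ‖v i‖ = 1 := by
    refine le_antisymm (hv i) ?_
    have h1 : ‖T i n‖ ≤ ‖v i‖ * ‖T i n‖ := by
      have := real_inner_le_norm (v i) (T i n); rwa [hi] at this
    nlinarith [hTn i]
  have h2 : ⟪v i, T i n⟫ = ‖v i‖ * ‖T i n‖ := by rw [hnv, one_mul, hi]
  rw [inner_eq_norm_mul_iff_real, hnv, one_smul] at h2
  have hvi : v i = ‖T i n‖⁻¹ • T i n := by
    have h3 := congrArg (fun z => ‖T i n‖⁻¹ • z) h2
    simpa [smul_smul, inv_mul_cancel₀ (hTn i).ne'] using h3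
  rw [← hvc i, hvi, _root_.map_smul]

theorem closure_mSum (T : Fin m → F →L[ℝ] F) :
    closure (mSum (fun i => T i '' ball 0 1)) = mSum (fun i => T i '' closedBall 0 1) := by
  apply le_antisymm
  · -- closure ⊆ Kc since Kc is compact (image of compact) hence closed, and K ⊆ Kc
    have himg : mSum (fun i => T i '' closedBall 0 1) =
        (fun v : Fin m → F => ∑ i, T i (v i)) '' Set.pi Set.univ (fun _ => closedBall 0 1) := by
      ext x
      constructor
      · rintro ⟨c, hc, rfl⟩
        choose v hv hvc using hc
        exact ⟨v, fun i _ => hv i, by simp [hvc]⟩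
      · rintro ⟨v, hv, rfl⟩
        exact ⟨fun i => T i (v i), fun i => ⟨v i, hv i (Set.mem_univ i), rfl⟩, rfl⟩
    have hcomp : IsCompact ((fun v : Fin m → F => ∑ i, T i (v i)) ''
        Set.pi Set.univ (fun _ => closedBall 0 1)) := by
      refine (isCompact_univ_pi fun _ => isCompact_closedBall 0 1).image ?_
      exact continuous_finset_sum _ fun i _ => (T i).continuous.comp (continuous_apply i)
    rw [himg]
    apply closure_minimal _ hcomp.isClosed
    rw [← himg]
    rintro x ⟨c, hc, rfl⟩
    exact ⟨c, fun i => Set.image_mono ball_subset_closedBall (hc i), rfl⟩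
  · -- Kc ⊆ closure K via scaling
    rintro x ⟨c, hc, rfl⟩
    choose v hv hvc using hc
    simp only [mem_closedBall, dist_zero_right] at hv
    set x := ∑ i, c i with hx
    have htend : Filter.Tendsto (fun t : ℝ => t • x) (nhdsWithin 1 (Set.Iio 1)) (nhds x) := by
      have : Filter.Tendsto (fun t : ℝ => t • x) (nhds 1) (nhds ((1 : ℝ) • x)) :=
        (continuous_id.smul continuous_const).tendsto 1
      rw [one_smul] at this
      exact this.mono_left nhdsWithin_le_nhds
    refine mem_closure_of_tendsto htend ?_
    filter_upwards [Ioo_mem_nhdsLT_of_mem (by constructor <;> norm_num : (1:ℝ) ∈ Set.Ioc 0 1)]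
      with t ht
    refine ⟨fun i => t • c i, fun i => ⟨t • v i, ?_, by rw [_root_.map_smul, hvc i]⟩, by
      rw [hx, Finset.smul_sum]⟩
    rw [mem_ball, dist_zero_right, norm_smul, Real.norm_eq_abs, abs_of_pos ht.1]
    calc t * ‖v i‖ ≤ t * 1 := mul_le_mul_of_nonneg_left (hv i) ht.1.le
      _ < 1 := by rw [mul_one]; exact ht.2

theorem convex_mSum (T : Fin m → F →L[ℝ] F) :
    Convex ℝ (mSum (fun i => T i '' ball 0 1)) := by
  rintro x ⟨c, hc, rfl⟩ y ⟨d, hd, rfl⟩ a b ha hb hab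
  choose v hv hvc using hc
  choose w hw hwc using hd
  simp only [mem_ball, dist_zero_right] at hv hw
  refine ⟨fun i => a • c i + b • d i, fun i => ⟨a • v i + b • w i, ?_, by
    rw [map_add, _root_.map_smul, _root_.map_smul, hvc i, hwc i]⟩, by
    rw [Finset.smul_sum, Finset.smul_sum, ← Finset.sum_add_distrib]⟩
  rw [mem_ball, dist_zero_right]
  calc ‖a • v i + b • w i‖ ≤ ‖a • v i‖ + ‖b • w i‖ := norm_add_le _ _
    _ = a * ‖v i‖ + b * ‖w i‖ := by
        rw [norm_smul, norm_smul, Real.norm_eq_abs, Real.norm_eq_abs, abs_of_nonneg ha,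
          abs_of_nonneg hb]
    _ < 1 := by
        rcases eq_or_lt_of_le ha with h | h
        · rw [← h] at hab ⊢
          rw [zero_add] at hab
          rw [hab] at hb ⊢
          simpa using hw i
        · have h1 : a * ‖v i‖ < a := by nlinarith [hv i]
          have h2 : b * ‖w i‖ ≤ b := by nlinarith [hw i]
          linarith

theorem isOpen_mSum (T : Fin m → F →L[ℝ] F)
    (hinj : ∀ i, Function.Injective (T i)) (hm : 0 < m) :
    IsOpen (mSum (fun i => T i '' ball 0 1)) := by
  set j : Fin m := ⟨0, hm⟩
  have hsurj : Function.Surjective (T j) := by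
    have := LinearMap.injective_iff_surjective (f := (T j : F →ₗ[ℝ] F))
    exact this.mp (hinj j)
  have hopenj : IsOpen (T j '' ball 0 1) := ((T j).isOpenMap hsurj) _ isOpen_ball
  rw [isOpen_iff]
  rintro x ⟨c, hc, rfl⟩
  obtain ⟨ε, hε, hball⟩ := isOpen_iff.mp hopenj (c j) (hc j)
  refine ⟨ε, hε, fun y hy => ?_⟩
  rw [mem_ball] at hy
  refine ⟨fun i => c i + (if i = j then y - ∑ i, c i else 0), fun i => ?_, ?_⟩
  · by_cases h : i = j
    · subst h
      simp only [if_pos rfl]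
      apply hball
      rw [mem_ball]
      simp only [dist_eq_norm]
      rw [add_sub_cancel_left]
      rwa [dist_eq_norm] at hy
    · simpa [h] using hc i
  · rw [Finset.sum_add_distrib, Finset.sum_ite_eq' Finset.univ j
      (fun _ => y - ∑ i, c i)]
    simp

theorem frontier_mSum (T : Fin m → F →L[ℝ] F)
    (hsym : ∀ i x y, ⟪T i x, y⟫ = ⟪x, T i y⟫)
    (hinj : ∀ i, Function.Injective (T i)) :
    frontier (mSum (fun i => T i '' ball 0 1)) =
      {x | ∃ n : F, ‖n‖ = 1 ∧ x = ∑ i, (‖T i n‖)⁻¹ • T i (T i n)} := by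
  rcases Nat.eq_zero_or_pos m with hm | hm
  · subst hm
    have hK : mSum (fun i : Fin 0 => T i '' ball 0 1) = {0} := by
      ext x
      simp only [mSum, Set.mem_setOf_eq, Set.mem_singleton_iff]
      constructor
      · rintro ⟨c, -, rfl⟩; simp
      · rintro rfl; exact ⟨fun i => 0, fun i => i.elim0, by simp⟩
    rw [hK]
    rcases subsingleton_or_nontrivial F with hF | hF
    · have huniv : ({0} : Set F) = Set.univ :=
        Set.eq_univ_of_forall fun x => by simp [Subsingleton.elim x 0]
      rw [huniv, frontier_univ]
      symm
      rw [Set.eq_empty_iff_forall_notMem]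
      rintro x ⟨n, hn, -⟩
      rw [Subsingleton.elim n (0 : F), norm_zero] at hn
      norm_num at hn
    · rw [frontier, closure_singleton, interior_singleton]
      ext x
      simp only [Set.diff_empty, Set.mem_singleton_iff, Set.mem_setOf_eq]
      constructor
      · rintro rfl
        obtain ⟨n, hn⟩ := exists_norm_eq F zero_le_one
        exact ⟨n, hn, by simp⟩
      · rintro ⟨n, hn, rfl⟩; simp
  · have hclos := closure_mSum T
    have hopen := isOpen_mSum T hinj hm
    ext x
    rw [frontier, Set.mem_diff, hopen.interior_eq, hclos]
    constructor
    · rintro ⟨hxc, hxK⟩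
      obtain ⟨f, hf⟩ := geometric_hahn_banach_open_point (convex_mSum T) hopen hxK
      have h0K : (0 : F) ∈ mSum (fun i => T i '' ball 0 1) :=
        ⟨fun _ => 0, fun i => ⟨0, by simp, by simp⟩, by simp⟩
      have hfx : 0 < f x := by simpa using hf 0 h0K
      set y := (InnerProductSpace.toDual ℝ F).symm f with hy
      have hyz : ∀ z, ⟪y, z⟫ = f z := fun z => InnerProductSpace.toDual_symm_apply
      have hy0 : y ≠ 0 := by
        intro h
        rw [← hyz x, h, inner_zero_left] at hfx
        exact lt_irrefl 0 hfx
      set n := ‖y‖⁻¹ • y with hn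
      have hnn : ‖n‖ = 1 := by
        rw [hn, norm_smul, norm_inv, norm_norm, inv_mul_cancel₀ (norm_ne_zero_iff.mpr hy0)]
      have hn0 : n ≠ 0 := fun h => by rw [h, norm_zero] at hnn; norm_num at hnn
      have hzn : ∀ z, ⟪z, n⟫ = ‖y‖⁻¹ * f z := fun z => by
        rw [real_inner_comm, hn, real_inner_smul_left, hyz]
      have hKc : ∀ z ∈ mSum (fun i => T i '' closedBall 0 1), f z ≤ f x := by
        intro z hz
        rw [← hclos] at hz
        exact closure_minimal (fun a ha => (hf a ha).le)
          (isClosed_le f.continuous continuous_const) hz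
      have hub := upper_bound T hsym (n := n) hxc
      have hlb : ∑ i, ‖T i n‖ ≤ ⟪x, n⟫ := by
        have hb := hKc _ (boundary_mem T hinj hnn)
        rw [← inner_boundary T hsym hinj hnn, hzn, hzn]
        exact mul_le_mul_of_nonneg_left hb (inv_nonneg.mpr (norm_nonneg y))
      exact ⟨n, hnn, eq_of_inner_eq T hsym hinj hn0 hxc (le_antisymm hub hlb)⟩
    · rintro ⟨n, hnn, rfl⟩
      have hn0 : n ≠ 0 := fun h => by rw [h, norm_zero] at hnn; norm_num at hnn
      refine ⟨boundary_mem T hinj hnn, fun hK => ?_⟩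
      have hlt := strict_upper_bound T hsym hinj hm hn0 hK
      rw [inner_boundary T hsym hinj hnn] at hlt
      exact lt_irrefl _ hlt

theorem minkSum_image_equiv {N m : ℕ} (S : Fin m → Set (EuclideanSpace ℝ (Fin N))) :
    minkSum (fun i => (EuclideanSpace.equiv (Fin N) ℝ) '' S i) =
      (EuclideanSpace.equiv (Fin N) ℝ) '' mSum S := by
  set e := EuclideanSpace.equiv (Fin N) ℝ
  ext x
  constructor
  · rintro ⟨c, hc, rfl⟩
    refine ⟨∑ i, e.symm (c i), ⟨fun i => e.symm (c i), fun i => ?_, rfl⟩, ?_⟩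
    · obtain ⟨z, hz, hze⟩ := hc i
      show e.symm (c i) ∈ S i
      rw [← hze, e.symm_apply_apply]
      exact hz
    · rw [map_sum]
      exact Finset.sum_congr rfl fun i _ => e.apply_symm_apply (c i)
  · rintro ⟨z, ⟨c, hc, rfl⟩, rfl⟩
    exact ⟨fun i => e (c i), fun i => ⟨c i, hc i, rfl⟩, by rw [map_sum]⟩

theorem minkowski_sum_boundary_param {N m : ℕ} (A : Fin m → Matrix (Fin N) (Fin N) ℝ)
    (hA : ∀ i, (A i).PosDef) :
    frontier (minkSum (fun i => (A i).mulVec '' {v | euclNorm v < 1})) =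
      {x | ∃ n : Fin N → ℝ, euclNorm n = 1 ∧
        x = ∑ i, (euclNorm ((A i).mulVec n))⁻¹ • (A i * A i).mulVec n} := by
  set e := EuclideanSpace.equiv (Fin N) ℝ with he
  set T : Fin m → EuclideanSpace ℝ (Fin N) →L[ℝ] EuclideanSpace ℝ (Fin N) := fun i =>
    (e.symm.toContinuousLinearMap.comp
      ((LinearMap.toContinuousLinearMap (A i).mulVecLin).comp e.toContinuousLinearMap)) with hT
  have hTapp : ∀ i z, T i z = e.symm ((A i) *ᵥ (e z)) := fun i z => rfl
  have hnorm : ∀ v : Fin N → ℝ, euclNorm v = ‖e.symm v‖ := fun v => rfl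
  have hdot : ∀ i, ∀ x y : Fin N → ℝ, (A i) *ᵥ x ⬝ᵥ y = x ⬝ᵥ (A i) *ᵥ y := by
    intro i x y
    have hTr : (A i)ᵀ = A i := by
      ext a b
      have h := congrFun (congrFun (hA i).1 a) b
      simpa [Matrix.conjTranspose_apply] using h
    rw [dotProduct_mulVec, ← mulVec_transpose, hTr, dotProduct_comm, dotProduct_mulVec,
      ← mulVec_transpose, hTr, dotProduct_comm]
  have hsym : ∀ i (x y : EuclideanSpace ℝ (Fin N)), ⟪T i x, y⟫ = ⟪x, T i y⟫ := by
    intro i x y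
    rw [hTapp, hTapp, EuclideanSpace.inner_eq_star_dotProduct,
      EuclideanSpace.inner_eq_star_dotProduct]
    simp only [star_trivial]
    exact (hdot i (e y) (e x)).symm
  have hmvinj : ∀ i, Function.Injective ((A i).mulVec) := by
    intro i u v huv
    by_contra h
    have h0 : (A i) *ᵥ (u - v) = 0 := by rw [mulVec_sub, huv, sub_self]
    have hp := (hA i).dotProduct_mulVec_pos (x := u - v) (sub_ne_zero.mpr h)
    rw [h0, dotProduct_zero] at hp
    exact lt_irrefl 0 hp
  have hinj : ∀ i, Function.Injective (T i) := by
    intro i a b hab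
    rw [hTapp, hTapp] at hab
    have h1 := congrArg e hab
    rw [e.apply_symm_apply, e.apply_symm_apply] at h1
    exact e.injective (hmvinj i h1)
  have himg : ∀ i, (A i).mulVec '' {v | euclNorm v < 1} = e '' (T i '' ball 0 1) := by
    intro i
    ext x
    constructor
    · rintro ⟨v, hv, rfl⟩
      refine ⟨T i (e.symm v), ⟨e.symm v, ?_, rfl⟩, ?_⟩
      · rw [mem_ball, dist_zero_right, ← hnorm]
        exact hv
      · rw [hTapp, e.apply_symm_apply, e.apply_symm_apply]
    · rintro ⟨z, ⟨w, hw, rfl⟩, rfl⟩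
      refine ⟨e w, ?_, ?_⟩
      · rw [Set.mem_setOf_eq, hnorm, e.symm_apply_apply]
        rwa [mem_ball, dist_zero_right] at hw
      · rw [hTapp, e.apply_symm_apply]
  have hLHS : (minkSum fun i => (A i).mulVec '' {v | euclNorm v < 1}) =
      e '' (mSum fun i => T i '' ball 0 1) := by
    have : (fun i => (A i).mulVec '' {v | euclNorm v < 1}) =
        fun i => e '' (T i '' ball 0 1) := funext himg
    rw [this]
    exact minkSum_image_equiv _
  have hfront := Homeomorph.image_frontier e.toHomeomorph (mSum fun i => T i '' ball 0 1)
  have hcoe : (e.toHomeomorph : EuclideanSpace ℝ (Fin N) → (Fin N → ℝ)) = e := rfl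
  rw [hcoe] at hfront
  rw [hLHS, ← hfront, frontier_mSum T hsym hinj]
  ext x
  simp only [Set.mem_image, Set.mem_setOf_eq]
  constructor
  · rintro ⟨z, ⟨n', hn', rfl⟩, rfl⟩
    refine ⟨e n', by rw [hnorm, e.symm_apply_apply]; exact hn', ?_⟩
    rw [map_sum]
    refine Finset.sum_congr rfl fun i _ => ?_
    rw [_root_.map_smul]
    have h1 : ‖T i n'‖ = euclNorm ((A i) *ᵥ (e n')) := by rw [hTapp, hnorm]
    have h2 : e (T i (T i n')) = (A i * A i) *ᵥ (e n') := by
      rw [hTapp i (T i n'), e.apply_symm_apply, hTapp, e.apply_symm_apply, mulVec_mulVec]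
    rw [h1, h2]
  · rintro ⟨n, hn, rfl⟩
    refine ⟨∑ i, (‖T i (e.symm n)‖)⁻¹ • T i (T i (e.symm n)),
      ⟨e.symm n, by rw [← hnorm]; exact hn, rfl⟩, ?_⟩
    rw [map_sum]
    refine Finset.sum_congr rfl fun i _ => ?_
    rw [_root_.map_smul]
    have h1 : ‖T i (e.symm n)‖ = euclNorm ((A i) *ᵥ n) := by
      rw [hTapp, e.apply_symm_apply, hnorm]
    have h2 : e (T i (T i (e.symm n))) = (A i * A i) *ᵥ n := by
      rw [hTapp i (T i (e.symm n)), e.apply_symm_apply, hTapp, e.apply_symm_apply,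
        e.apply_symm_apply, mulVec_mulVec]
    rw [h1, h2]
end

section
/- Let A₁, ..., A_m be symmetric positive-definite N×N matrices and for n ∈ S^{N-1} define C(n) = Σ_{i=1}^m [A_i²/‖A_i n‖ − (A_i²n)(A_i²n)ᵀ/‖A_i n‖³]. Then C(n) is positive semidefinite of rank exactly N−1, with kernel span{n}. -/
open Matrix

/-- The curvature matrix `C(A,n) = A²/‖An‖ − (A²n)(A²n)ᵀ/‖An‖³`. -/
noncomputable def Cmat {N : ℕ} (A : Matrix (Fin N) (Fin N) ℝ) (n : Fin N → ℝ) :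
    Matrix (Fin N) (Fin N) ℝ :=
  (euclNorm (A.mulVec n))⁻¹ • (A * A) -
    ((euclNorm (A.mulVec n)) ^ 3)⁻¹ • Matrix.vecMulVec ((A * A).mulVec n) ((A * A).mulVec n)

lemma euclNorm_sq {N : ℕ} (v : Fin N → ℝ) : euclNorm v ^ 2 = v ⬝ᵥ v := by
  rw [euclNorm, ← real_inner_self_eq_norm_sq]
  simp [PiLp.inner_apply, dotProduct, RCLike.inner_apply, mul_comm]
  rw [EuclideanSpace.norm_eq, Real.sq_sqrt (Finset.sum_nonneg fun i _ => sq_nonneg _)]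
  simp [Real.norm_eq_abs, sq_abs, sq]

lemma euclNorm_pos {N : ℕ} {v : Fin N → ℝ} (hv : v ≠ 0) : 0 < euclNorm v := by
  rw [euclNorm, norm_pos_iff]
  simpa using hv

lemma dot_sq_le {N : ℕ} (x y : Fin N → ℝ) : (x ⬝ᵥ y) ^ 2 ≤ (x ⬝ᵥ x) * (y ⬝ᵥ y) := by
  have h := real_inner_mul_inner_self_le ((WithLp.equiv 2 (Fin N → ℝ)).symm x)
    ((WithLp.equiv 2 (Fin N → ℝ)).symm y)
  rw [PiLp.inner_apply, PiLp.inner_apply, PiLp.inner_apply] at h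
  simpa [PiLp.inner_apply, dotProduct, RCLike.inner_apply, sq, mul_comm] using h

lemma vecMulVec_mulVec {N : ℕ} (a b v : Fin N → ℝ) :
    (vecMulVec a b) *ᵥ v = (b ⬝ᵥ v) • a := by
  ext i
  simp [vecMulVec, mulVec, dotProduct, Finset.mul_sum, mul_assoc, mul_comm, mul_left_comm]

lemma dot_mul_mul {N : ℕ} {A : Matrix (Fin N) (Fin N) ℝ} (hA : A.IsHermitian)
    (v w : Fin N → ℝ) : v ⬝ᵥ (A * A) *ᵥ w = (A *ᵥ v) ⬝ᵥ (A *ᵥ w) := by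
  have hAt : Aᵀ = A := by
    rw [← conjTranspose_eq_transpose_of_trivial, hA.eq]
  rw [← mulVec_mulVec, dotProduct_mulVec, ← mulVec_transpose, hAt]


lemma Cmat_mulVec {N : ℕ} (A : Matrix (Fin N) (Fin N) ℝ) (n v : Fin N → ℝ) :
    (Cmat A n) *ᵥ v = (euclNorm (A *ᵥ n))⁻¹ • ((A * A) *ᵥ v) -
      ((euclNorm (A *ᵥ n)) ^ 3)⁻¹ • ((((A * A) *ᵥ n) ⬝ᵥ v) • ((A * A) *ᵥ n)) := by
  simp [Cmat, sub_mulVec, smul_mulVec, _root_.vecMulVec_mulVec]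

lemma mulVec_ne_zero {N : ℕ} {A : Matrix (Fin N) (Fin N) ℝ} (hA : A.PosDef)
    {n : Fin N → ℝ} (hn : n ≠ 0) : A *ᵥ n ≠ 0 := by
  intro h
  exact hn (Matrix.mulVec_injective_iff_isUnit.mpr hA.isUnit (by simpa using h))

lemma Cmat_quad {N : ℕ} {A : Matrix (Fin N) (Fin N) ℝ} (hA : A.PosDef)
    (n v : Fin N → ℝ) (hn : n ≠ 0) :
    v ⬝ᵥ (Cmat A n) *ᵥ v = ((euclNorm (A *ᵥ n)) ^ 3)⁻¹ *
      ((euclNorm (A *ᵥ n)) ^ 2 * ((A *ᵥ v) ⬝ᵥ (A *ᵥ v)) - ((A *ᵥ n) ⬝ᵥ (A *ᵥ v)) ^ 2) := by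
  have hr : 0 < euclNorm (A *ᵥ n) := euclNorm_pos (mulVec_ne_zero hA hn)
  have h1 : v ⬝ᵥ (A * A) *ᵥ v = (A *ᵥ v) ⬝ᵥ (A *ᵥ v) := dot_mul_mul hA.1 v v
  have h2 : ((A * A) *ᵥ n) ⬝ᵥ v = (A *ᵥ n) ⬝ᵥ (A *ᵥ v) := by
    rw [dotProduct_comm, dot_mul_mul hA.1, dotProduct_comm]
  rw [Cmat_mulVec, dotProduct_sub, dotProduct_smul, dotProduct_smul, dotProduct_smul, h1, h2]
  rw [dot_mul_mul hA.1 v n, dotProduct_comm (A *ᵥ v)]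
  have hrne : euclNorm (A *ᵥ n) ≠ 0 := hr.ne'
  field_simp
  rw [dotProduct_comm (A *ᵥ v) (A *ᵥ n)]
  linear_combination (euclNorm (A *ᵥ n) ^ 2 * ((A *ᵥ v) ⬝ᵥ (A *ᵥ v)) - ((A *ᵥ n) ⬝ᵥ (A *ᵥ v)) ^ 2 *
    ((euclNorm (A *ᵥ n) * (euclNorm (A *ᵥ n))⁻¹) ^ 2 + euclNorm (A *ᵥ n) * (euclNorm (A *ᵥ n))⁻¹ + 1)) *
    mul_inv_cancel₀ hrne

lemma Cmat_isHermitian {N : ℕ} {A : Matrix (Fin N) (Fin N) ℝ} (hA : A.IsHermitian)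
    (n : Fin N → ℝ) : (Cmat A n).IsHermitian := by
  have hAA : (A * A).IsHermitian := by
    unfold Matrix.IsHermitian
    rw [conjTranspose_mul, hA.eq]
  have hb : (vecMulVec ((A * A) *ᵥ n) ((A * A) *ᵥ n)).IsHermitian := by
    ext i j
    simp [vecMulVec, mul_comm]
  have hsmul : ∀ (c : ℝ) {M : Matrix (Fin N) (Fin N) ℝ}, M.IsHermitian → (c • M).IsHermitian := by
    intro c M h
    show _ = _
    rw [conjTranspose_smul, h.eq, star_trivial]
  exact (hsmul _ hAA).sub (hsmul _ hb)

lemma Cmat_quad_nonneg {N : ℕ} {A : Matrix (Fin N) (Fin N) ℝ} (hA : A.PosDef)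
    {n : Fin N → ℝ} (hn : n ≠ 0) (v : Fin N → ℝ) : 0 ≤ v ⬝ᵥ (Cmat A n) *ᵥ v := by
  rw [Cmat_quad hA n v hn]
  have hr : 0 < euclNorm (A *ᵥ n) := euclNorm_pos (mulVec_ne_zero hA hn)
  apply mul_nonneg (by positivity)
  rw [euclNorm_sq, sub_nonneg, sq]
  calc (A *ᵥ n ⬝ᵥ A *ᵥ v) * (A *ᵥ n ⬝ᵥ A *ᵥ v) ≤ (A *ᵥ n ⬝ᵥ A *ᵥ n) * (A *ᵥ v ⬝ᵥ A *ᵥ v) := by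
        simpa [sq] using dot_sq_le (A *ᵥ n) (A *ᵥ v)
    _ = _ := rfl

lemma Cmat_posSemidef {N : ℕ} {A : Matrix (Fin N) (Fin N) ℝ} (hA : A.PosDef)
    {n : Fin N → ℝ} (hn : n ≠ 0) : (Cmat A n).PosSemidef := by
  refine .of_dotProduct_mulVec_nonneg (Cmat_isHermitian hA.1 n) fun v => ?_
  simpa using Cmat_quad_nonneg hA hn v

lemma Cmat_mulVec_n {N : ℕ} {A : Matrix (Fin N) (Fin N) ℝ} (hA : A.PosDef)
    {n : Fin N → ℝ} (hn : n ≠ 0) : (Cmat A n) *ᵥ n = 0 := by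
  have hr : 0 < euclNorm (A *ᵥ n) := euclNorm_pos (mulVec_ne_zero hA hn)
  have hdot : ((A * A) *ᵥ n) ⬝ᵥ n = euclNorm (A *ᵥ n) ^ 2 := by
    rw [euclNorm_sq, dotProduct_comm, dot_mul_mul hA.1]
  rw [Cmat_mulVec, hdot, smul_smul, sub_eq_zero]
  congr 1
  field_simp

lemma Cmat_ker {N : ℕ} {A : Matrix (Fin N) (Fin N) ℝ} (hA : A.PosDef)
    {n : Fin N → ℝ} (hn : n ≠ 0) {v : Fin N → ℝ} (hv : (Cmat A n) *ᵥ v = 0) :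
    ∃ c : ℝ, v = c • n := by
  have hr : 0 < euclNorm (A *ᵥ n) := euclNorm_pos (mulVec_ne_zero hA hn)
  set r := euclNorm (A *ᵥ n) with hrdef
  set c : ℝ := (r ^ 2)⁻¹ * (((A * A) *ᵥ n) ⬝ᵥ v) with hc
  refine ⟨c, ?_⟩
  have hinj : Function.Injective ((A * A).mulVec) :=
    Matrix.mulVec_injective_iff_isUnit.mpr (hA.isUnit.mul hA.isUnit)
  apply hinj
  rw [Cmat_mulVec, sub_eq_zero] at hv
  rw [← hrdef] at hv
  have : (A * A) *ᵥ v = (r * (r ^ 3)⁻¹ * (((A * A) *ᵥ n) ⬝ᵥ v)) • ((A * A) *ᵥ n) := by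
    have := congrArg (fun w => r • w) hv
    simpa [smul_smul, mul_assoc, inv_mul_cancel₀ hr.ne', mul_inv_cancel₀ hr.ne'] using this
  rw [this, mulVec_smul]
  congr 1
  rw [hc]
  field_simp

lemma dotProduct_sum' {N : ℕ} {ι : Type*} (s : Finset ι) (v : Fin N → ℝ)
    (w : ι → Fin N → ℝ) : v ⬝ᵥ (∑ i ∈ s, w i) = ∑ i ∈ s, v ⬝ᵥ w i := by
  simp [dotProduct, Finset.sum_apply, Finset.mul_sum]
  rw [Finset.sum_comm]

lemma sum_mulVec' {N : ℕ} {ι : Type*} (s : Finset ι) (M : ι → Matrix (Fin N) (Fin N) ℝ)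
    (v : Fin N → ℝ) : (∑ i ∈ s, M i) *ᵥ v = ∑ i ∈ s, (M i) *ᵥ v := by
  ext j
  simp [mulVec, dotProduct, Matrix.sum_apply, Finset.sum_mul]
  rw [Finset.sum_comm]

theorem Cmat_sum_posSemidef_rank {N m : ℕ} (hm : 0 < m)
    (A : Fin m → Matrix (Fin N) (Fin N) ℝ) (hA : ∀ i, (A i).PosDef)
    (n : Fin N → ℝ) (hn : euclNorm n = 1) :
    (∑ i, Cmat (A i) n).PosSemidef ∧ (∑ i, Cmat (A i) n).rank = N - 1 ∧
      ∀ v : Fin N → ℝ, (∑ i, Cmat (A i) n).mulVec v = 0 ↔ ∃ c : ℝ, v = c • n := by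
  have hn0 : n ≠ 0 := by
    intro h
    rw [h] at hn
    simp [euclNorm] at hn
  have hpsd : ∀ i, (Cmat (A i) n).PosSemidef := fun i => Cmat_posSemidef (hA i) hn0
  have hsum : (∑ i, Cmat (A i) n).PosSemidef :=
    Finset.sum_induction _ _ (fun a b ha hb => ha.add hb) Matrix.PosSemidef.zero
      (fun i _ => hpsd i)
  have hker : ∀ v : Fin N → ℝ, (∑ i, Cmat (A i) n) *ᵥ v = 0 ↔ ∃ c : ℝ, v = c • n := by
    intro v
    constructor
    · intro hv
      have hq : ∑ i, v ⬝ᵥ (Cmat (A i) n) *ᵥ v = 0 := by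
        have := congrArg (fun w => v ⬝ᵥ w) hv
        simpa [sum_mulVec', dotProduct_sum'] using this
      rw [Finset.sum_eq_zero_iff_of_nonneg
        (fun i _ => Cmat_quad_nonneg (hA i) hn0 v)] at hq
      set i0 : Fin m := ⟨0, hm⟩
      have h0 : (Cmat (A i0) n) *ᵥ v = 0 :=
        ((hpsd i0).dotProduct_mulVec_zero_iff v).mp (by simpa using hq i0 (Finset.mem_univ _))
      exact Cmat_ker (hA i0) hn0 h0
    · rintro ⟨c, rfl⟩
      have : ∀ i : Fin m, (Cmat (A i) n) *ᵥ (c • n) = 0 := by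
        intro i
        rw [mulVec_smul, Cmat_mulVec_n (hA i) hn0, smul_zero]
      rw [sum_mulVec']
      exact Finset.sum_eq_zero fun i _ => this i
  refine ⟨hsum, ?_, hker⟩
  have hkerEq : LinearMap.ker (Matrix.mulVecLin (∑ i, Cmat (A i) n)) = Submodule.span ℝ {n} := by
    ext v
    rw [LinearMap.mem_ker, Matrix.mulVecLin_apply, hker v, Submodule.mem_span_singleton]
    constructor <;> rintro ⟨c, hc⟩ <;> exact ⟨c, hc.symm⟩
  have h1 : Module.finrank ℝ (LinearMap.ker (Matrix.mulVecLin (∑ i, Cmat (A i) n))) = 1 := by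
    rw [hkerEq]
    exact finrank_span_singleton hn0
  have h2 := LinearMap.finrank_range_add_finrank_ker (Matrix.mulVecLin (∑ i, Cmat (A i) n))
  rw [h1] at h2
  have h3 : Module.finrank ℝ (Fin N → ℝ) = N := by simp
  rw [h3] at h2
  have : (∑ i, Cmat (A i) n).rank = Module.finrank ℝ
      (LinearMap.range (Matrix.mulVecLin (∑ i, Cmat (A i) n))) := rfl
  omega
end

section
/- Let A be a symmetric positive-definite N×N matrix, S ∈ GL(N,R), and n ∈ R^N a nonzero vector. With C(A,n) := A²/‖An‖ − (A²n)(A²n)ᵀ/‖An‖³ defined for arbitrary nonzero n, one has C((SA²Sᵀ)^{1/2}, n) = S · C(A, Sᵀn) · Sᵀ. -/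
open Matrix

lemma euclNorm_eq_sqrt_dot {N : ℕ} (v : Fin N → ℝ) :
    euclNorm v = Real.sqrt (v ⬝ᵥ v) := by
  rw [euclNorm, EuclideanSpace.norm_eq]
  congr 1
  simp [dotProduct, sq, Real.norm_eq_abs, abs_mul_abs_self]

lemma dot_mulVec_self {N : ℕ} (M : Matrix (Fin N) (Fin N) ℝ) (hM : Mᵀ = M)
    (v : Fin N → ℝ) :
    M.mulVec v ⬝ᵥ M.mulVec v = v ⬝ᵥ (M * M).mulVec v := by
  rw [dotProduct_mulVec, ← vecMul_transpose, hM, ← mulVec_mulVec, dotProduct_mulVec,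
    ← vecMul_transpose, hM, ← dotProduct_mulVec, ← hM, mulVec_transpose, hM]

lemma vecMulVec_mulVec_s8 {N : ℕ} (S : Matrix (Fin N) (Fin N) ℝ) (x y : Fin N → ℝ) :
    Matrix.vecMulVec (S.mulVec x) (S.mulVec y) = S * Matrix.vecMulVec x y * Sᵀ := by
  ext i j
  simp only [vecMulVec_apply, mul_apply, mulVec, dotProduct, transpose_apply,
    Finset.sum_mul, Finset.mul_sum]
  apply Finset.sum_congr rfl; intro k _
  apply Finset.sum_congr rfl; intro l _
  ring

theorem Cmat_transform {N : ℕ} (A S B : Matrix (Fin N) (Fin N) ℝ)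
    (hA : A.PosDef) (hS : IsUnit S.det) (hB : B.PosDef)
    (hBsq : B * B = S * (A * A) * Sᵀ) (n : Fin N → ℝ) (hn : n ≠ 0) :
    Cmat B n = S * Cmat A (Sᵀ.mulVec n) * Sᵀ := by
  have hBt : Bᵀ = B := by simpa using hB.isHermitian.eq
  have hAt : Aᵀ = A := by simpa using hA.isHermitian.eq
  have hnorm : euclNorm (B.mulVec n) = euclNorm (A.mulVec (Sᵀ.mulVec n)) := by
    rw [euclNorm_eq_sqrt_dot, euclNorm_eq_sqrt_dot, dot_mulVec_self B hBt,
      dot_mulVec_self A hAt, hBsq, ← mulVec_mulVec, ← mulVec_mulVec,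
      dotProduct_mulVec n S, ← mulVec_transpose]
  have hv : (S * (A * A) * Sᵀ).mulVec n
      = S.mulVec ((A * A).mulVec (Sᵀ.mulVec n)) := by
    rw [← mulVec_mulVec, ← mulVec_mulVec]
  rw [Cmat, Cmat, hnorm, hBsq, hv, vecMulVec_mulVec_s8, Matrix.mul_sub, Matrix.sub_mul,
    Matrix.mul_smul, Matrix.smul_mul, Matrix.mul_smul, Matrix.smul_mul,
    Matrix.mul_assoc, Matrix.mul_assoc]
end

section
/- Let A₁, ..., A_m and A be symmetric positive-definite N×N matrices, with associated open solid ellipsoids E_i = {A_i v : ‖v‖<1} and E = {Av : ‖v‖<1}. Then E ⊆ E₁ + ⋯ + E_m if and only if ‖Av‖ ≤ Σ_{i=1}^m ‖A_i v‖ for all v ∈ R^N. -/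
open Matrix

variable {N : ℕ}

noncomputable def eE {N : ℕ} (v : Fin N → ℝ) : EuclideanSpace ℝ (Fin N) :=
  (WithLp.equiv 2 (Fin N → ℝ)).symm v

lemma en_eq (v : Fin N → ℝ) : euclNorm v = ‖eE v‖ := rfl

lemma en_nonneg (v : Fin N → ℝ) : 0 ≤ euclNorm v := norm_nonneg _

lemma dot_inner (u v : Fin N → ℝ) : u ⬝ᵥ v = inner (𝕜 := ℝ) (eE u) (eE v) := by
  simp [dotProduct, PiLp.inner_apply, RCLike.inner_apply, eE, mul_comm]

lemma dot_le (u v : Fin N → ℝ) : u ⬝ᵥ v ≤ euclNorm u * euclNorm v := by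
  rw [dot_inner]; exact real_inner_le_norm _ _

lemma dot_self (v : Fin N → ℝ) : v ⬝ᵥ v = euclNorm v * euclNorm v := by
  rw [dot_inner]; exact real_inner_self_eq_norm_mul_norm _

lemma en_smul (t : ℝ) (v : Fin N → ℝ) : euclNorm (t • v) = |t| * euclNorm v := by
  show ‖(WithLp.equiv 2 (Fin N → ℝ)).symm (t • v)‖ = _
  rw [WithLp.equiv_symm_apply, WithLp.toLp_smul, norm_smul, Real.norm_eq_abs]; rfl

lemma en_zero (v : Fin N → ℝ) (h : euclNorm v = 0) : v = 0 := by
  have : eE v = 0 := norm_eq_zero.mp h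
  simpa [eE] using congrArg (WithLp.equiv 2 (Fin N → ℝ)) this

lemma mulVec_dot (A : Matrix (Fin N) (Fin N) ℝ) (hA : Aᵀ = A) (w u : Fin N → ℝ) :
    A.mulVec w ⬝ᵥ u = w ⬝ᵥ A.mulVec u := by
  rw [dotProduct_comm, dotProduct_mulVec, ← mulVec_transpose, hA, dotProduct_comm]

lemma transpose_eq_of_posDef (A : Matrix (Fin N) (Fin N) ℝ) (hA : A.PosDef) : Aᵀ = A := by
  have := hA.1; exact (show A.IsSymm by simpa using this)

lemma ball_open : IsOpen {v : Fin N → ℝ | euclNorm v < 1} := by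
  have : {v : Fin N → ℝ | euclNorm v < 1}
      = (EuclideanSpace.equiv (Fin N) ℝ).symm ⁻¹' Metric.ball 0 1 := by
    ext v; simp [euclNorm, mem_ball_zero_iff]
  rw [this]
  exact Metric.isOpen_ball.preimage (EuclideanSpace.equiv (Fin N) ℝ).symm.continuous

lemma ball_convex : Convex ℝ {v : Fin N → ℝ | euclNorm v < 1} := by
  have h : {v : Fin N → ℝ | euclNorm v < 1}
      = (WithLp.linearEquiv 2 ℝ (Fin N → ℝ)).symm.toLinearMap ⁻¹'
          Metric.ball (0 : EuclideanSpace ℝ (Fin N)) 1 := by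
    ext v; simp [euclNorm, mem_ball_zero_iff]
  rw [h]
  exact (convex_ball (0 : EuclideanSpace ℝ (Fin N)) 1).linear_preimage _

lemma mulVec_cont (A : Matrix (Fin N) (Fin N) ℝ) : Continuous A.mulVec := by
  have : A.mulVec = ⇑A.mulVecLin := rfl
  rw [this]; exact A.mulVecLin.continuous_of_finiteDimensional


variable {N m : ℕ}

lemma image_open (A : Matrix (Fin N) (Fin N) ℝ) (hA : A.PosDef) :
    IsOpen (A.mulVec '' {v | euclNorm v < 1}) := by
  have hdet : IsUnit A.det := isUnit_iff_ne_zero.mpr (ne_of_gt hA.det_pos)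
  have h1 : ∀ x, A.mulVec (A⁻¹.mulVec x) = x := by
    intro x; rw [mulVec_mulVec, Matrix.mul_nonsing_inv _ hdet, one_mulVec]
  have h2 : ∀ x, A⁻¹.mulVec (A.mulVec x) = x := by
    intro x; rw [mulVec_mulVec, Matrix.nonsing_inv_mul _ hdet, one_mulVec]
  have : A.mulVec '' {v | euclNorm v < 1} = A⁻¹.mulVec ⁻¹' {v | euclNorm v < 1} := by
    ext x
    constructor
    · rintro ⟨v, hv, rfl⟩; simpa [h2] using hv
    · intro hx; exact ⟨A⁻¹.mulVec x, hx, h1 x⟩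
  rw [this]
  exact ball_open.preimage (mulVec_cont _)

lemma image_convex (A : Matrix (Fin N) (Fin N) ℝ) :
    Convex ℝ (A.mulVec '' {v | euclNorm v < 1}) := by
  have : A.mulVec '' {v | euclNorm v < 1} = A.mulVecLin '' {v | euclNorm v < 1} := rfl
  rw [this]; exact ball_convex.linear_image _

lemma minkSum_convex (E : Fin m → Set (Fin N → ℝ)) (hE : ∀ i, Convex ℝ (E i)) :
    Convex ℝ (minkSum E) := by
  rintro x ⟨c, hc, rfl⟩ y ⟨d, hd, rfl⟩ a b ha hb hab
  refine ⟨fun i => a • c i + b • d i, fun i => hE i (hc i) (hd i) ha hb hab, ?_⟩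
  simp [Finset.sum_add_distrib, Finset.smul_sum]

lemma minkSum_open (E : Fin m → Set (Fin N → ℝ)) (hm : 0 < m) (hE : ∀ i, IsOpen (E i)) :
    IsOpen (minkSum E) := by
  rw [isOpen_iff_forall_mem_open]
  rintro x ⟨c, hc, rfl⟩
  set i0 : Fin m := ⟨0, hm⟩
  refine ⟨(fun y => y + ∑ i ∈ Finset.univ.erase i0, c i) '' E i0, ?_, ?_, ?_⟩
  · rintro z ⟨y, hy, rfl⟩
    refine ⟨Function.update c i0 y, ?_, ?_⟩
    · intro i
      rcases eq_or_ne i i0 with rfl | hne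
      · simpa using hy
      · simpa [Function.update_of_ne hne] using hc i
    · rw [Finset.sum_update_of_mem (Finset.mem_univ i0)]; simp [Finset.sdiff_singleton_eq_erase]
  · exact (Homeomorph.addRight _).isOpenMap _ (hE i0)
  · exact ⟨c i0, hc i0, Finset.add_sum_erase _ _ (Finset.mem_univ i0)⟩

lemma zero_mem_minkSum (A : Fin m → Matrix (Fin N) (Fin N) ℝ) :
    (0 : Fin N → ℝ) ∈ minkSum (fun i => (A i).mulVec '' {v | euclNorm v < 1}) := by
  refine ⟨fun _ => 0, fun i => ⟨0, ?_, by simp⟩, by simp⟩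
  simp [euclNorm]

lemma clm_repr (f : (Fin N → ℝ) →L[ℝ] ℝ) (x : Fin N → ℝ) :
    f x = x ⬝ᵥ (fun i => f (Pi.single i 1)) := by
  conv_lhs => rw [← Finset.univ_sum_single x]
  rw [map_sum]
  simp only [dotProduct]
  congr 1; ext i
  have : Pi.single i (x i) = (x i) • (Pi.single i 1 : Fin N → ℝ) := by
    ext j; rcases eq_or_ne j i with rfl | h <;> simp [Pi.single_apply, *]
  rw [this, _root_.map_smul, smul_eq_mul]
lemma sum_dot {m : ℕ} (f : Fin m → Fin N → ℝ) (v : Fin N → ℝ) :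
    (∑ i, f i) ⬝ᵥ v = ∑ i, f i ⬝ᵥ v := by
  simp only [dotProduct, Finset.sum_apply, Finset.sum_mul]
  exact Finset.sum_comm



theorem inner_ellipsoid_containment_iff {N m : ℕ}
    (A : Fin m → Matrix (Fin N) (Fin N) ℝ) (hA : ∀ i, (A i).PosDef)
    (B : Matrix (Fin N) (Fin N) ℝ) (hB : B.PosDef) :
    B.mulVec '' {v | euclNorm v < 1} ⊆
        minkSum (fun i => (A i).mulVec '' {v | euclNorm v < 1}) ↔
      ∀ v : Fin N → ℝ, euclNorm (B.mulVec v) ≤ ∑ i, euclNorm ((A i).mulVec v) := by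
  have hBsym : Bᵀ = B := transpose_eq_of_posDef B hB
  have hAsym : ∀ i, (A i)ᵀ = A i := fun i => transpose_eq_of_posDef _ (hA i)
  constructor
  · intro h v
    set S := ∑ i, euclNorm ((A i).mulVec v) with hSdef
    have hS0 : 0 ≤ S := Finset.sum_nonneg fun i _ => en_nonneg _
    by_contra hlt
    push_neg at hlt
    set n := euclNorm (B.mulVec v) with hndef
    have hn : 0 < n := lt_of_le_of_lt hS0 hlt
    obtain ⟨t, ht1, ht2⟩ := exists_between ((div_lt_one hn).mpr hlt)
    have ht0 : 0 ≤ t := le_of_lt (lt_of_le_of_lt (div_nonneg hS0 hn.le) ht1)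
    set w := (t / n) • B.mulVec v with hwdef
    have hwball : euclNorm w < 1 := by
      rw [hwdef, en_smul, abs_of_nonneg (div_nonneg ht0 hn.le), ← hndef,
        div_mul_cancel₀ _ (ne_of_gt hn)]
      exact ht2
    obtain ⟨c, hc, hsum⟩ := h ⟨w, hwball, rfl⟩
    choose d hd hcd using hc
    have key : B.mulVec w ⬝ᵥ v = t * n := by
      rw [mulVec_dot B hBsym, hwdef, smul_dotProduct, dot_self, ← hndef, smul_eq_mul]
      field_simp
    have key2 : B.mulVec w ⬝ᵥ v ≤ S := by
      rw [hsum, sum_dot]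
      apply Finset.sum_le_sum
      intro i _
      rw [← hcd i, mulVec_dot _ (hAsym i)]
      calc d i ⬝ᵥ (A i).mulVec v ≤ euclNorm (d i) * euclNorm ((A i).mulVec v) := dot_le _ _
        _ ≤ 1 * euclNorm ((A i).mulVec v) :=
            mul_le_mul_of_nonneg_right (hd i).le (en_nonneg _)
        _ = euclNorm ((A i).mulVec v) := one_mul _
    rw [key] at key2
    have : S < t * n := (div_lt_iff₀ hn).mp ht1
    linarith
  · intro h x hx
    obtain ⟨w, hw, rfl⟩ := hx
    by_contra hxS
    rcases Nat.eq_zero_or_pos m with hm | hm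
    · subst hm
      have h0 : euclNorm (B.mulVec w) ≤ 0 := by simpa using h w
      have hz : B.mulVec w = 0 := en_zero _ (le_antisymm h0 (en_nonneg _))
      exact hxS ⟨fun i => i.elim0, fun i => i.elim0, by simp [hz]⟩
    · have hSopen : IsOpen (minkSum (fun i => (A i).mulVec '' {v | euclNorm v < 1})) :=
        minkSum_open _ hm (fun i => image_open _ (hA i))
      have hSconv : Convex ℝ (minkSum (fun i => (A i).mulVec '' {v | euclNorm v < 1})) :=
        minkSum_convex _ (fun i => image_convex _)
      obtain ⟨f, hf⟩ := geometric_hahn_banach_open_point hSconv hSopen hxS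
      set u : Fin N → ℝ := fun i => f (Pi.single i 1) with hu
      set Su := ∑ i, euclNorm ((A i).mulVec u) with hSu
      have hSu0 : 0 ≤ Su := Finset.sum_nonneg fun i _ => en_nonneg _
      have hfx_le : f (B.mulVec w) ≤ euclNorm w * Su := by
        rw [clm_repr f, ← hu, mulVec_dot B hBsym]
        calc w ⬝ᵥ B.mulVec u ≤ euclNorm w * euclNorm (B.mulVec u) := dot_le _ _
          _ ≤ euclNorm w * Su := mul_le_mul_of_nonneg_left (h u) (en_nonneg w)
      have h0lt : 0 < f (B.mulVec w) := by
        have := hf _ (zero_mem_minkSum A)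
        simpa using this
      have hkey : ∀ t : ℝ, 0 ≤ t → t < 1 → t * Su < f (B.mulVec w) := by
        intro t ht0 ht1
        set c : Fin m → Fin N → ℝ := fun i =>
          if hn : euclNorm ((A i).mulVec u) = 0 then 0
          else (t / euclNorm ((A i).mulVec u)) • (A i).mulVec u with hcdef
        have hcball : ∀ i, euclNorm (c i) < 1 := by
          intro i
          by_cases hn : euclNorm ((A i).mulVec u) = 0
          · simp only [hcdef, dif_pos hn]
            have : euclNorm (0 : Fin N → ℝ) = 0 := by simp [euclNorm]
            rw [this]; norm_num
          · simp only [hcdef, dif_neg hn]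
            rw [en_smul, abs_of_nonneg (div_nonneg ht0 (en_nonneg _)), div_mul_cancel₀ _ hn]
            exact ht1
        have hcdot : ∀ i, c i ⬝ᵥ (A i).mulVec u = t * euclNorm ((A i).mulVec u) := by
          intro i
          by_cases hn : euclNorm ((A i).mulVec u) = 0
          · simp [hcdef, dif_pos hn, hn]
          · simp only [hcdef, dif_neg hn, smul_dotProduct, smul_eq_mul, dot_self]
            field_simp
        have hmemS : (∑ i, (A i).mulVec (c i)) ∈
            minkSum (fun i => (A i).mulVec '' {v | euclNorm v < 1}) :=
          ⟨fun i => (A i).mulVec (c i), fun i => ⟨c i, hcball i, rfl⟩, rfl⟩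
        have hlt := hf _ hmemS
        have heq : f (∑ i, (A i).mulVec (c i)) = t * Su := by
          rw [clm_repr f, ← hu, sum_dot _ _, hSu, Finset.mul_sum]
          apply Finset.sum_congr rfl
          intro i _
          rw [mulVec_dot _ (hAsym i), hcdot i]
        rwa [heq] at hlt
      rcases eq_or_lt_of_le hSu0 with hSu0' | hSu0'
      · have : f (B.mulVec w) ≤ 0 := by rw [← hSu0', mul_zero] at hfx_le; exact hfx_le
        linarith
      · obtain ⟨t, ht1, ht2⟩ := exists_between (show euclNorm w < 1 from hw)
        have ht0 : 0 ≤ t := le_trans (en_nonneg w) ht1.le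
        have h1 := hkey t ht0 ht2
        have h2 : euclNorm w * Su < t * Su := mul_lt_mul_of_pos_right ht1 hSu0'
        linarith
end

section
/- Let A₁, A₂ be symmetric positive-definite N×N matrices and v an eigenvector of A₁⁻¹A₂ with eigenvalue λ > 0 and ‖v‖ = 1. Then A₁²v/‖A₁v‖ + A₂²v/‖A₂v‖ = (A₁+A₂)²v/‖(A₁+A₂)v‖. In particular, the boundary point of the inner ellipsoid E_{A₁+A₂} in the direction determined by normal v coincides with the corresponding boundary point of E_{A₁}+E_{A₂}. -/
open Matrix

lemma euclNorm_smul {N : ℕ} (c : ℝ) (v : Fin N → ℝ) :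
    euclNorm (c • v) = |c| * euclNorm v := by
  simp [euclNorm, norm_smul, Real.norm_eq_abs]

theorem contact_points_of_sum_ellipsoid {N : ℕ} (A₁ A₂ : Matrix (Fin N) (Fin N) ℝ)
    (hA₁ : A₁.PosDef) (hA₂ : A₂.PosDef) (v : Fin N → ℝ) (hv : euclNorm v = 1)
    (lam : ℝ) (hlam : 0 < lam) (heig : A₂.mulVec v = lam • A₁.mulVec v) :
    (euclNorm (A₁.mulVec v))⁻¹ • (A₁ * A₁).mulVec v +
        (euclNorm (A₂.mulVec v))⁻¹ • (A₂ * A₂).mulVec v =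
      (euclNorm ((A₁ + A₂).mulVec v))⁻¹ • ((A₁ + A₂) * (A₁ + A₂)).mulVec v := by
  set w := A₁.mulVec v with hw
  have hv0 : v ≠ 0 := by
    intro h
    rw [h] at hv
    simp [euclNorm] at hv
  have hvw : 0 < v ⬝ᵥ w := by
    simpa using hA₁.dotProduct_mulVec_pos hv0
  have hw0 : w ≠ 0 := by
    intro h
    rw [h] at hvw
    simp at hvw
  have hn : 0 < euclNorm w := by
    have : (WithLp.equiv 2 (Fin N → ℝ)).symm w ≠ 0 := by
      simpa using hw0
    exact norm_pos_iff.mpr this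
  have hsum : (A₁ + A₂).mulVec v = (1 + lam) • w := by
    rw [add_mulVec, heig, add_smul, one_smul]
  have e1 : (A₁ * A₁).mulVec v = A₁.mulVec w := by
    rw [← mulVec_mulVec]
  have e2 : (A₂ * A₂).mulVec v = lam • A₂.mulVec w := by
    rw [← mulVec_mulVec, heig, mulVec_smul]
  have e3 : ((A₁ + A₂) * (A₁ + A₂)).mulVec v
      = (1 + lam) • (A₁.mulVec w + A₂.mulVec w) := by
    rw [← mulVec_mulVec, hsum, mulVec_smul, add_mulVec]
  have n2 : euclNorm (A₂.mulVec v) = lam * euclNorm w := by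
    rw [heig, euclNorm_smul, abs_of_pos hlam]
  have n3 : euclNorm ((A₁ + A₂).mulVec v) = (1 + lam) * euclNorm w := by
    rw [hsum, euclNorm_smul, abs_of_pos (by linarith)]
  rw [e1, e2, e3, n2, n3, smul_smul, smul_smul]
  have h1 : (lam * euclNorm w)⁻¹ * lam = (euclNorm w)⁻¹ := by
    field_simp
  have h2 : ((1 + lam) * euclNorm w)⁻¹ * (1 + lam) = (euclNorm w)⁻¹ := by
    have : (1:ℝ) + lam ≠ 0 := by linarith
    field_simp
  rw [h1, h2, smul_add]
end

section
/- Let A, B be symmetric positive-definite N×N matrices and let S = A(I + (A⁻¹B²A⁻¹)^{1/2}). Then SSᵀ = A² + 2·(A²#B²) + B², where P#Q = P^{1/2}(P^{-1/2}QP^{-1/2})^{1/2}P^{1/2} is the matrix geometric mean. -/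
open Matrix

open Classical in
/-- The symmetric positive-semidefinite square root (junk value `0` off PSD matrices). -/
noncomputable def msqrt {N : ℕ} (M : Matrix (Fin N) (Fin N) ℝ) : Matrix (Fin N) (Fin N) ℝ :=
  if h : M.PosSemidef then
    (h.1.eigenvectorUnitary : Matrix (Fin N) (Fin N) ℝ) *
      diagonal ((↑) ∘ (√·) ∘ h.1.eigenvalues) *
      (star h.1.eigenvectorUnitary : Matrix (Fin N) (Fin N) ℝ)
  else 0

/-- The operator geometric mean `P#Q = P^{1/2}(P^{-1/2}QP^{-1/2})^{1/2}P^{1/2}`. -/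
noncomputable def geomMean {N : ℕ} (P Q : Matrix (Fin N) (Fin N) ℝ) :
    Matrix (Fin N) (Fin N) ℝ :=
  msqrt P * msqrt ((msqrt P)⁻¹ * Q * (msqrt P)⁻¹) * msqrt P

open scoped MatrixOrder in
lemma msqrt_eq {N : ℕ} {M : Matrix (Fin N) (Fin N) ℝ} (h : M.PosSemidef) :
    msqrt M = CFC.sqrt M := by
  rw [msqrt, dif_pos h, CFC.sqrt_eq_cfc, cfc_nnreal_eq_real _ M, h.1.cfc_eq, IsHermitian.cfc,
    Unitary.conjStarAlgAut_apply]
  congr 3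
  funext i
  simp [Real.coe_toNNReal', h.eigenvalues_nonneg i]

open scoped MatrixOrder in
lemma msqrt_mul_self {N : ℕ} {A : Matrix (Fin N) (Fin N) ℝ} (hA : A.PosDef) :
    msqrt (A * A) = A := by
  have hsq : (A * A).PosSemidef := by
    have := posSemidef_conjTranspose_mul_self A
    rwa [hA.isHermitian.eq] at this
  rw [msqrt_eq hsq]
  exact CFC.sqrt_mul_self A (nonneg_iff_posSemidef.mpr hA.posSemidef)

open scoped MatrixOrder in
theorem john_matrix_identity {N : ℕ} (A B : Matrix (Fin N) (Fin N) ℝ)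
    (hA : A.PosDef) (hB : B.PosDef) :
    (A * (1 + msqrt (A⁻¹ * (B * B) * A⁻¹))) * (A * (1 + msqrt (A⁻¹ * (B * B) * A⁻¹)))ᵀ =
      A * A + 2 • geomMean (A * A) (B * B) + B * B := by
  have hAinv : (A⁻¹)ᴴ = A⁻¹ := hA.isHermitian.inv
  have hBB : (B * B).PosSemidef := by
    have := posSemidef_conjTranspose_mul_self B
    rwa [hB.isHermitian.eq] at this
  have hM : (A⁻¹ * (B * B) * A⁻¹).PosSemidef := by
    have := hBB.conjTranspose_mul_mul_same A⁻¹
    rwa [hAinv] at this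
  set C := msqrt (A⁻¹ * (B * B) * A⁻¹) with hC
  have hCpsd : C.PosSemidef := by rw [hC, msqrt_eq hM]; exact nonneg_iff_posSemidef.mp (CFC.sqrt_nonneg _)
  have hCC : C * C = A⁻¹ * (B * B) * A⁻¹ := by rw [hC, msqrt_eq hM]; exact CFC.sqrt_mul_sqrt_self _ (nonneg_iff_posSemidef.mpr hM)
  have hCt : Cᵀ = C := by
    have := hCpsd.isHermitian.eq
    rwa [conjTranspose_eq_transpose_of_trivial] at this
  have hAt : Aᵀ = A := by
    have := hA.isHermitian.eq
    rwa [conjTranspose_eq_transpose_of_trivial] at this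
  have hAinv' : A * A⁻¹ = 1 := mul_nonsing_inv A (isUnit_iff_ne_zero.mpr hA.det_pos.ne')
  have hAinv'' : A⁻¹ * A = 1 := nonsing_inv_mul A (isUnit_iff_ne_zero.mpr hA.det_pos.ne')
  have hgeom : geomMean (A * A) (B * B) = A * C * A := by
    rw [geomMean, msqrt_mul_self hA, hC]
  rw [hgeom, transpose_mul, transpose_add, hCt, hAt, transpose_one]
  have key : A * C * C * A = B * B := by
    rw [mul_assoc A C C, hCC]
    calc A * (A⁻¹ * (B * B) * A⁻¹) * A
        = (A * A⁻¹) * (B * B) * (A⁻¹ * A) := by noncomm_ring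
      _ = B * B := by rw [hAinv', hAinv'']; noncomm_ring
  calc A * (1 + C) * ((1 + C) * A)
      = A * A + 2 • (A * C * A) + A * C * C * A := by
        simp only [two_smul]; noncomm_ring
    _ = A * A + 2 • (A * C * A) + B * B := by rw [key]
end
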